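/- Let g:[0,T]→ℝ be (α(·)+ε)-variable-order Hölder with g(0)=0, α C^1 into [a,b]⊂(0,1), ε < 1−sup α, K(x,t) = Γ(α(t))(x−t)^{−α(t)}. Then for fixed x ∈ (0,T), lim_{h→0} (1/h) ∫_x^{x+h} K(x+h,t)(g(t)−g(x)) dt = 0. In particular this boundary term does not contribute to the derivative of x ↦ ∫_0^x K(x,t)g(t)dt. -/

import Mathlib

/-!
Since `g` is `(α(t) + ε)`-Hölder, on `(x, x + h)` the integrand is bounded by
`M N h^(α(t)+ε) (x + h - t)^(-α(t))`, where `M` bounds `Γ` on `[a, b]`. As `x + h - t ≤ h`, raising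
the exponent `α(t)` to `c = sup α < 1` only enlarges this, and `∫ (x + h - t)^(-c) = h^(1-c)/(1-c)`.
Hence the averaged boundary term is `O(h^ε)`.
-/

open Set Real MeasureTheory intervalIntegral Filter

theorem Real.continuousOn_Gamma_Ioi : ContinuousOn Gamma (Ioi 0) := fun _ hs =>
  (differentiableAt_Gamma fun m =>
    ((neg_nonpos.2 m.cast_nonneg).trans_lt hs).ne').continuousAt.continuousWithinAt

theorem Real.rpow_mul_rpow_neg_le_of_le {u h β γ : ℝ} (hu : 0 < u) (huh : u ≤ h) (hβγ : β ≤ γ) :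
    h ^ β * u ^ (-β) ≤ h ^ γ * u ^ (-γ) := by
  have hh : 0 < h := hu.trans_le huh
  have key : (h / u) ^ β ≤ (h / u) ^ γ := rpow_le_rpow_of_exponent_le ((one_le_div hu).2 huh) hβγ
  rw [div_rpow hh.le hu.le, div_rpow hh.le hu.le] at key
  simpa only [rpow_neg hu.le, div_eq_mul_inv] using key

theorem intervalIntegrable_sub_rpow_neg {c : ℝ} (hc : c < 1) (x h : ℝ) :
    IntervalIntegrable (fun t => (x + h - t) ^ (-c)) volume x (x + h) := by
  have := ((intervalIntegrable_rpow' (r := -c) (by linarith)).comp_sub_left (x + h) (a := 0)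
    (b := h)).symm
  simpa using this

theorem integral_sub_rpow_neg {c : ℝ} (hc : c < 1) (x h : ℝ) :
    ∫ t in x..(x + h), (x + h - t) ^ (-c) = h ^ (1 - c) / (1 - c) := by
  rw [intervalIntegral.integral_comp_sub_left (fun s => s ^ (-c)), sub_self, add_sub_cancel_left,
    integral_rpow (Or.inl (by linarith)), zero_rpow (by linarith)]
  ring_nf

theorem norm_average_integral_kernel_le {k α g : ℝ → ℝ} {x h c ε M N : ℝ} (hh : 0 < h)
    (hc : c < 1) (hM : 0 ≤ M) (hN : 0 ≤ N)
    (hk : ∀ t ∈ Ioo x (x + h), ‖k t‖ ≤ M)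
    (hα : ∀ t ∈ Ioo x (x + h), 0 ≤ α t + ε ∧ α t ≤ c)
    (hg : ∀ t ∈ Ioo x (x + h), |g t - g x| ≤ N * (t - x) ^ (α t + ε)) :
    ‖(1 / h) * ∫ t in x..(x + h), k t * (x + h - t) ^ (-α t) * (g t - g x)‖
      ≤ M * N / (1 - c) * h ^ ε := by
  have pointwise : ∀ t ∈ Ioo x (x + h), ‖k t * (x + h - t) ^ (-α t) * (g t - g x)‖
      ≤ M * N * h ^ ε * h ^ c * (x + h - t) ^ (-c) := by
    rintro t ⟨hxt, hth⟩
    obtain ⟨hα0, hαc⟩ := hα t ⟨hxt, hth⟩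
    have hu : 0 < x + h - t := by linarith
    have holder : |g t - g x| ≤ N * (h ^ ε * h ^ α t) := by
      rw [← rpow_add hh, add_comm ε]
      exact (hg t ⟨hxt, hth⟩).trans
        (mul_le_mul_of_nonneg_left (rpow_le_rpow (by linarith) (by linarith) hα0) hN)
    calc ‖k t * (x + h - t) ^ (-α t) * (g t - g x)‖
        = ‖k t‖ * (x + h - t) ^ (-α t) * |g t - g x| := by
          rw [norm_mul, norm_mul, norm_of_nonneg (rpow_nonneg hu.le _),
            Real.norm_eq_abs (g t - g x)]
      _ ≤ M * (x + h - t) ^ (-α t) * (N * (h ^ ε * h ^ α t)) := by gcongr; exact hk t ⟨hxt, hth⟩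
      _ = M * N * h ^ ε * (h ^ α t * (x + h - t) ^ (-α t)) := by ring
      _ ≤ M * N * h ^ ε * (h ^ c * (x + h - t) ^ (-c)) :=
          mul_le_mul_of_nonneg_left
            (rpow_mul_rpow_neg_le_of_le hu (by linarith) hαc) (by positivity)
      _ = M * N * h ^ ε * h ^ c * (x + h - t) ^ (-c) := by ring
  have integral_le := norm_integral_le_of_norm_le (by linarith : x ≤ x + h)
    (by
      filter_upwards [Measure.ae_ne volume (x + h)] with t hne ht
      exact pointwise t ⟨ht.1, ht.2.lt_of_ne hne⟩)
    ((intervalIntegrable_sub_rpow_neg hc x h).const_mul (M * N * h ^ ε * h ^ c))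
  rw [intervalIntegral.integral_const_mul, integral_sub_rpow_neg hc] at integral_le
  have hpow : h ^ c * h ^ (1 - c) = h := by rw [← rpow_add hh, add_sub_cancel, rpow_one]
  rw [norm_mul, norm_of_nonneg (by positivity : (0 : ℝ) ≤ 1 / h)]
  calc 1 / h * ‖∫ t in x..(x + h), k t * (x + h - t) ^ (-α t) * (g t - g x)‖
      ≤ 1 / h * (M * N * h ^ ε * h ^ c * (h ^ (1 - c) / (1 - c))) := by gcongr
    _ = M * N / (1 - c) * h ^ ε := by
        rw [mul_div_assoc', mul_assoc _ (h ^ c), hpow]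
        field_simp

theorem stmt_15_general (T a b : ℝ) (ha : 0 < a)
    (α : ℝ → ℝ) (hαval : ∀ t ∈ Icc 0 T, α t ∈ Icc a b)
    (αsup : ℝ) (hαsup : IsLUB (α '' Icc 0 T) αsup)
    (ε : ℝ) (hε : 0 < ε) (hεb : ε < 1 - αsup)
    (g : ℝ → ℝ) (N : ℝ)
    (hgH : ∀ x ∈ Icc 0 T, ∀ y ∈ Icc 0 T,
      |g x - g y| ≤ N * |x - y| ^ (max (α x) (α y) + ε))
    (x : ℝ) (hx : x ∈ Ioo (0:ℝ) T) :
    Tendsto (fun h : ℝ => (1 / h) *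
        ∫ t in x..(x + h), Real.Gamma (α t) * (x + h - t) ^ (-(α t)) * (g t - g x))
      (nhdsWithin 0 (Ioi 0)) (nhds 0) := by
  have hx0 : x ∈ Icc 0 T := Ioo_subset_Icc_self hx
  obtain ⟨M, hM⟩ := isCompact_Icc.exists_bound_of_continuousOn
    (continuousOn_Gamma_Ioi.mono fun _ hs => ha.trans_le hs.1 : ContinuousOn Gamma (Icc a b))
  have hM0 : 0 ≤ M := (norm_nonneg _).trans (hM _ (hαval x hx0))
  have hN : 0 ≤ N := by
    have := (abs_nonneg _).trans (hgH x hx0 0 ⟨le_rfl, hx0.1.trans hx0.2⟩)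
    exact nonneg_of_mul_nonneg_left this (rpow_pos_of_pos (abs_pos.2 (sub_ne_zero.2 hx.1.ne')) _)
  have bound : ∀ᶠ h in nhdsWithin 0 (Ioi 0),
      ‖(1 / h) * ∫ t in x..(x + h), Gamma (α t) * (x + h - t) ^ (-(α t)) * (g t - g x)‖
        ≤ M * N / (1 - αsup) * h ^ ε := by
    filter_upwards [Ioo_mem_nhdsGT (lt_min one_pos (sub_pos.2 hx.2))] with h ⟨hh, hδ⟩
    have hIcc : ∀ t ∈ Ioo x (x + h), t ∈ Icc 0 T := fun t ht =>
      ⟨hx.1.le.trans ht.1.le, by linarith [ht.2, min_le_right 1 (T - x)]⟩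
    refine norm_average_integral_kernel_le hh (by linarith) hM0 hN
      (fun t ht => hM _ (hαval t (hIcc t ht)))
      (fun t ht => ⟨by linarith [(hαval t (hIcc t ht)).1], hαsup.1 ⟨t, hIcc t ht, rfl⟩⟩)
      (fun t ht => ?_)
    refine (hgH t (hIcc t ht) x hx0).trans (mul_le_mul_of_nonneg_left ?_ hN)
    rw [abs_of_pos (sub_pos.2 ht.1)]
    exact rpow_le_rpow_of_exponent_ge (sub_pos.2 ht.1)
      (by linarith [ht.2, min_le_left 1 (T - x)]) (by gcongr; exact le_max_left _ _)
  have decay : Tendsto (fun h : ℝ => M * N / (1 - αsup) * h ^ ε) (nhdsWithin 0 (Ioi 0)) (nhds 0) :=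
    by simpa using (tendsto_nhdsWithin_of_tendsto_nhds tendsto_id).rpow_const_nhds_zero hε
      |>.const_mul (M * N / (1 - αsup))
  exact squeeze_zero_norm' bound decay

/-- The boundary term in the differentiation of `x ↦ ∫_0^x K(x,t)g(t)dt`,
`K(x,t) = Γ(α(t))(x−t)^{−α(t)}`, vanishes: for `g ∈ C_0^{α(·)+ε}` with Hölder
constant `N` and fixed `x ∈ (0,T)`,
`(1/h)∫_x^{x+h} K(x+h,t)(g(t)−g(x))dt → 0` as `h → 0⁺`. -/
theorem stmt_15 (T a b : ℝ) (hT : 0 < T) (ha : 0 < a) (hab : a ≤ b) (hb : b < 1)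
    (α : ℝ → ℝ) (hα : ContDiff ℝ 1 α) (hαval : ∀ t ∈ Icc 0 T, α t ∈ Icc a b)
    (αsup : ℝ) (hαsup : IsLUB (α '' Icc 0 T) αsup)
    (ε : ℝ) (hε : 0 < ε) (hεb : ε < 1 - αsup)
    (g : ℝ → ℝ) (hg0 : g 0 = 0) (N : ℝ)
    (hgH : ∀ x ∈ Icc 0 T, ∀ y ∈ Icc 0 T,
      |g x - g y| ≤ N * |x - y| ^ (max (α x) (α y) + ε))
    (x : ℝ) (hx : x ∈ Ioo (0:ℝ) T) :
    Tendsto (fun h : ℝ => (1 / h) *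
        ∫ t in x..(x + h), Real.Gamma (α t) * (x + h - t) ^ (-(α t)) * (g t - g x))
      (nhdsWithin 0 (Ioi 0)) (nhds 0) :=
  stmt_15_general T a b ha α hαval αsup hαsup ε hε hεb g N hgH x hx
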